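/- arXiv:1006.5621 — 2 statements merged into one kernel-verified Lean document; each statement's English description precedes it below -/
import Mathlib

section
/- For every integer t ≥ 12, the number S(t) of linear subspaces of the vector space GF(2)^t satisfies S(t) ≤ 2^{t(t+1)/4}. -/
/-!
Counting linearly independent `k`-tuples of `GF(2)^t` in two ways (each `k`-dimensional subspace
contains `∏_{i<k} (2^k - 2^i)` of them spanning it) gives
`N_k ⋅ ∏_{i<k} (2^k - 2^i) = ∏_{i<k} (2^t - 2^i)` for the number `N_k` of `k`-dimensional
subspaces, hence `N_k ≤ 2^{k(t-k)} / ∏_{j=1}^{k} (1 - 2^{-j}) ≤ (25/7) 2^{k(t-k)}`.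
The sums `A(t) = ∑_k 2^{k(t-k)}` satisfy `A(t+2) = 2 + 2^{t+1} A(t)`, so `A(t) + 2 ≤ (54/25) 2^{t²/4}`
propagates from `t = 6, 7` to all `t ≥ 6`. Thus `S(t) ≤ (54/7) 2^{t²/4} ≤ 2^{t/4} 2^{t²/4}` for `t ≥ 12`.
-/

open Module Submodule Finset

section Grassmannian

variable {K V : Type*} [DivisionRing K] [AddCommGroup V] [Module K V]

def spanOfLinearIndependent {k : ℕ} (v : {v : Fin k → V // LinearIndependent K v}) :
    {W : Submodule K V // finrank K W = k} :=
  ⟨span K (Set.range v.1), by rw [finrank_span_eq_card v.2, Fintype.card_fin]⟩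

noncomputable def spanOfLinearIndependentFiberEquiv [FiniteDimensional K V] {k : ℕ}
    (W : {W : Submodule K V // finrank K W = k}) :
    {v // spanOfLinearIndependent v = W} ≃ {u : Fin k → W.1 // LinearIndependent K u} where
  toFun v := ⟨fun i => ⟨v.1.1 i,
    congrArg Subtype.val v.2 ▸ subset_span (Set.mem_range_self i)⟩,
    .of_comp W.1.subtype v.1.2⟩
  invFun u := ⟨⟨W.1.subtype ∘ u.1, u.2.map' _ W.1.ker_subtype⟩, Subtype.ext <| by
    have hu : span K (Set.range u.1) = ⊤ :=
      u.2.span_eq_top_of_card_eq_finrank' (by rw [Fintype.card_fin, W.2])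
    change span K (Set.range (W.1.subtype ∘ u.1)) = W.1
    rw [Set.range_comp, ← map_span, hu, map_subtype_top]⟩
  left_inv _ := rfl
  right_inv _ := rfl

variable [Fintype K] [Finite V]

local notation "q" => Fintype.card K

theorem card_finrank_mul_prod {k : ℕ} (hk : k ≤ finrank K V) :
    Nat.card {W : Submodule K V // finrank K W = k} * ∏ i : Fin k, (q ^ k - q ^ (i : ℕ)) =
      ∏ i : Fin k, (q ^ finrank K V - q ^ (i : ℕ)) := by
  have : Fintype {W : Submodule K V // finrank K W = k} := Fintype.ofFinite _
  have hfiber (W : {W : Submodule K V // finrank K W = k}) :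
      Nat.card {v // spanOfLinearIndependent v = W} = ∏ i : Fin k, (q ^ k - q ^ (i : ℕ)) := by
    rw [Nat.card_congr (spanOfLinearIndependentFiberEquiv W), card_linearIndependent W.2.ge, W.2]
  rw [← card_linearIndependent hk, ← Nat.card_congr (Equiv.sigmaFiberEquiv spanOfLinearIndependent),
    Nat.card_sigma, Finset.sum_congr rfl fun W _ => hfiber W, sum_const, card_univ, smul_eq_mul,
    Nat.card_eq_fintype_card]

theorem card_submodule_eq_sum_card_finrank :
    Nat.card (Submodule K V) =
      ∑ k ∈ range (finrank K V + 1), Nat.card {W : Submodule K V // finrank K W = k} := by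
  classical
  have : Fintype (Submodule K V) := Fintype.ofFinite _
  rw [Nat.card_eq_fintype_card, ← card_univ,
    card_eq_sum_card_fiberwise (f := fun W : Submodule K V => finrank K W) fun W _ =>
      mem_range_succ_iff.2 W.finrank_le]
  simp only [Nat.card_eq_fintype_card, Fintype.card_subtype]

end Grassmannian

noncomputable def qPochhammerHalf (k : ℕ) : ℝ := ∏ j ∈ range k, (1 - (2 : ℝ)⁻¹ ^ (j + 1))

lemma one_sub_inv_two_pow_succ_pos (j : ℕ) : 0 < 1 - (2 : ℝ)⁻¹ ^ (j + 1) :=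
  sub_pos.2 (pow_lt_one₀ (by norm_num) (by norm_num) j.succ_ne_zero)

lemma qPochhammerHalf_succ (k : ℕ) :
    qPochhammerHalf (k + 1) = qPochhammerHalf k * (1 - (2 : ℝ)⁻¹ ^ (k + 1)) :=
  prod_range_succ _ _

lemma qPochhammerHalf_pos (k : ℕ) : 0 < qPochhammerHalf k :=
  prod_pos fun j _ => one_sub_inv_two_pow_succ_pos j

lemma qPochhammerHalf_antitone : Antitone qPochhammerHalf :=
  antitone_nat_of_succ_le fun k => by
    rw [qPochhammerHalf_succ]
    exact mul_le_of_le_one_right (qPochhammerHalf_pos k).le (sub_le_self _ (by positivity))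

/- `qPochhammerHalf k / (1 + 2 ⋅ 2⁻ᵏ)` is nondecreasing, as `(1 + 2x)(1 - x/2) ≥ 1 + x`
for `0 ≤ x ≤ 1/2`. -/
lemma mul_one_add_le_qPochhammerHalf {k : ℕ} (hk : 5 ≤ k) :
    7 / 25 * (1 + 2 * (2 : ℝ)⁻¹ ^ k) ≤ qPochhammerHalf k := by
  induction k, hk using Nat.le_induction with
  | base => norm_num [qPochhammerHalf, prod_range_succ]
  | succ k hk ih =>
    have hx : (2 : ℝ)⁻¹ ^ k ≤ 1 / 2 :=
      (pow_le_pow_of_le_one (by norm_num) (by norm_num) (by omega : 1 ≤ k)).trans_eq (by norm_num)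
    have hx0 : 0 ≤ (2 : ℝ)⁻¹ ^ k := by positivity
    rw [qPochhammerHalf_succ, pow_succ]
    calc 7 / 25 * (1 + 2 * ((2 : ℝ)⁻¹ ^ k * 2⁻¹))
        ≤ 7 / 25 * (1 + 2 * (2 : ℝ)⁻¹ ^ k) * (1 - (2 : ℝ)⁻¹ ^ k * 2⁻¹) := by nlinarith
      _ ≤ qPochhammerHalf k * (1 - (2 : ℝ)⁻¹ ^ k * 2⁻¹) :=
        mul_le_mul_of_nonneg_right ih (pow_succ (2 : ℝ)⁻¹ k ▸ one_sub_inv_two_pow_succ_pos k).le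

lemma seven_div_twentyfive_le_qPochhammerHalf (k : ℕ) : 7 / 25 ≤ qPochhammerHalf k := by
  rcases le_total 5 k with hk | hk
  · refine le_trans ?_ (mul_one_add_le_qPochhammerHalf hk)
    have : (0 : ℝ) ≤ (2 : ℝ)⁻¹ ^ k := by positivity
    nlinarith
  · calc (7 / 25 : ℝ) ≤ 7 / 25 * (1 + 2 * (2 : ℝ)⁻¹ ^ 5) := by norm_num
      _ ≤ qPochhammerHalf 5 := mul_one_add_le_qPochhammerHalf le_rfl
      _ ≤ qPochhammerHalf k := qPochhammerHalf_antitone hk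

lemma cast_prod_two_pow_sub_two_pow (k : ℕ) :
    ((∏ i : Fin k, (2 ^ k - 2 ^ (i : ℕ)) : ℕ) : ℝ) = 2 ^ (k * k) * qPochhammerHalf k := by
  have hfactor : ∀ i ∈ range k, ((2 ^ k - 2 ^ i : ℕ) : ℝ) = 2 ^ k * (1 - (2 : ℝ)⁻¹ ^ (k - i)) := by
    intro i hi
    have hik : i ≤ k := (mem_range.1 hi).le
    have hpow : (2 : ℝ) ^ k * 2⁻¹ ^ (k - i) = 2 ^ i := by
      rw [inv_pow, ← pow_sub₀ (2 : ℝ) two_ne_zero (k.sub_le i), Nat.sub_sub_self hik]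
    rw [Nat.cast_sub (Nat.pow_le_pow_right two_pos hik), mul_sub, mul_one, hpow]
    push_cast; rfl
  rw [Fin.prod_univ_eq_prod_range (fun i => 2 ^ k - 2 ^ i), Nat.cast_prod, prod_congr rfl hfactor,
    prod_mul_distrib, prod_const, card_range, ← pow_mul, qPochhammerHalf,
    ← prod_range_reflect (fun j => 1 - (2 : ℝ)⁻¹ ^ (j + 1))]
  refine congrArg _ (prod_congr rfl fun i hi => ?_)
  have := mem_range.1 hi
  congr 2
  omega

lemma sum_two_pow_mul_sub_add_two (t : ℕ) :
    ∑ j ∈ range (t + 3), 2 ^ (j * (t + 2 - j)) =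
      2 + 2 ^ (t + 1) * ∑ j ∈ range (t + 1), 2 ^ (j * (t - j)) := by
  rw [sum_range_succ', sum_range_succ, mul_sum]
  have hterm : ∀ j ∈ range (t + 1),
      2 ^ ((j + 1) * (t + 2 - (j + 1))) = 2 ^ (t + 1) * 2 ^ (j * (t - j)) := by
    intro j hj
    obtain ⟨d, rfl⟩ := Nat.exists_eq_add_of_le (mem_range_succ_iff.1 hj)
    rw [← pow_add, show j + d + 2 - (j + 1) = d + 1 by omega, Nat.add_sub_cancel_left]
    ring_nf
  rw [sum_congr rfl hterm]
  simp only [Nat.sub_self, mul_zero, zero_mul, pow_zero]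
  ring

lemma le_two_rpow_inv_four : (1.1725 : ℝ) ≤ 2 ^ (4 : ℝ)⁻¹ :=
  (Real.le_rpow_inv_iff_of_pos (by norm_num) (by norm_num) (by norm_num)).2 (by norm_num)

theorem sum_two_pow_mul_sub_add_two_le {t : ℕ} (ht : 6 ≤ t) :
    ((∑ j ∈ range (t + 1), 2 ^ (j * (t - j)) : ℕ) : ℝ) + 2 ≤ 54 / 25 * 2 ^ ((t : ℝ) * t / 4) := by
  induction t using Nat.strong_induction_on with
  | _ t ih =>
  obtain rfl | rfl | ⟨s, rfl, hs⟩ : t = 6 ∨ t = 7 ∨ ∃ s, t = s + 2 ∧ 6 ≤ s := by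
    rcases Nat.lt_or_ge t 8 with h | h
    · omega
    · exact .inr (.inr ⟨t - 2, by omega, by omega⟩)
  · rw [show ((6 : ℕ) : ℝ) * (6 : ℕ) / 4 = (9 : ℕ) by norm_num, Real.rpow_natCast]
    norm_num [sum_range_succ]
  · rw [show ((7 : ℕ) : ℝ) * (7 : ℕ) / 4 = (12 : ℕ) + (4 : ℝ)⁻¹ by norm_num,
      Real.rpow_add two_pos, Real.rpow_natCast]
    norm_num [sum_range_succ]
    linarith [le_two_rpow_inv_four]
  · have hs2 : (2 : ℝ) ≤ 2 ^ (s + 1) := le_self_pow₀ one_le_two (Nat.succ_ne_zero s)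
    have hexp : (↑(s + 2) : ℝ) * ↑(s + 2) / 4 = ↑(s + 1) + (s : ℝ) * s / 4 := by push_cast; ring
    rw [sum_two_pow_mul_sub_add_two, hexp, Real.rpow_add two_pos, Real.rpow_natCast]
    have ih_s := ih s (by omega) hs
    push_cast at ih_s ⊢
    nlinarith [mul_le_mul_of_nonneg_left ih_s (by positivity : (0 : ℝ) ≤ 2 ^ (s + 1))]

theorem card_finrank_le_two_pow {V : Type*} [AddCommGroup V] [Module (ZMod 2) V] [Finite V] {k : ℕ}
    (hk : k ≤ finrank (ZMod 2) V) :
    (Nat.card {W : Submodule (ZMod 2) V // finrank (ZMod 2) W = k} : ℝ) ≤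
      25 / 7 * 2 ^ (k * (finrank (ZMod 2) V - k)) := by
  set n := finrank (ZMod 2) V
  set G := Nat.card {W : Submodule (ZMod 2) V // finrank (ZMod 2) W = k}
  have hcount := card_finrank_mul_prod (K := ZMod 2) hk
  rw [ZMod.card] at hcount
  have hnum : ∏ i : Fin k, (2 ^ n - 2 ^ (i : ℕ)) ≤ 2 ^ (k * k) * 2 ^ (k * (n - k)) :=
    calc ∏ i : Fin k, (2 ^ n - 2 ^ (i : ℕ)) ≤ ∏ _i : Fin k, 2 ^ n :=
          prod_le_prod' fun i _ => Nat.sub_le _ _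
      _ = 2 ^ (k * k) * 2 ^ (k * (n - k)) := by
          rw [prod_const, card_univ, Fintype.card_fin, ← pow_mul, ← pow_add, ← Nat.mul_add,
            Nat.add_sub_cancel' hk, Nat.mul_comm]
  have hGP : (G : ℝ) * qPochhammerHalf k ≤ 2 ^ (k * (n - k)) := by
    refine le_of_mul_le_mul_left ?_ (by positivity : (0 : ℝ) < 2 ^ (k * k))
    rw [mul_left_comm, ← cast_prod_two_pow_sub_two_pow]
    exact_mod_cast hcount ▸ hnum
  nlinarith [seven_div_twentyfive_le_qPochhammerHalf k, (Nat.cast_nonneg G : (0 : ℝ) ≤ G)]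

/-- For every integer t ≥ 12, the number S(t) of linear subspaces of the
vector space GF(2)^t satisfies S(t) ≤ 2^{t(t+1)/4}. -/
theorem statement_0 (t : ℕ) (ht : 12 ≤ t) :
    (Nat.card (Submodule (ZMod 2) (Fin t → ZMod 2)) : ℝ) ≤
      2 ^ (((t : ℝ) * (t + 1)) / 4) := by
  have hdim : finrank (ZMod 2) (Fin t → ZMod 2) = t := finrank_fin_fun _
  have hsum := sum_two_pow_mul_sub_add_two_le (t := t) (by omega)
  have h8 : (8 : ℝ) ≤ 2 ^ ((t : ℝ) / 4) :=
    calc (8 : ℝ) = 2 ^ (3 : ℝ) := by norm_num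
      _ ≤ 2 ^ ((t : ℝ) / 4) := Real.rpow_le_rpow_of_exponent_le one_le_two
        (by rw [le_div_iff₀ (by norm_num)]; exact_mod_cast (by omega : 3 * 4 ≤ t))
  calc (Nat.card (Submodule (ZMod 2) (Fin t → ZMod 2)) : ℝ)
      = ∑ k ∈ range (t + 1), (Nat.card {W : Submodule (ZMod 2) (Fin t → ZMod 2) //
          finrank (ZMod 2) W = k} : ℝ) := by
        rw [card_submodule_eq_sum_card_finrank, hdim]; push_cast; rfl
    _ ≤ ∑ k ∈ range (t + 1), 25 / 7 * (2 : ℝ) ^ (k * (t - k)) := sum_le_sum fun k hk => by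
        have hk : k ≤ finrank (ZMod 2) (Fin t → ZMod 2) := by
          rw [hdim]; exact mem_range_succ_iff.1 hk
        have := card_finrank_le_two_pow hk
        rwa [hdim] at this
    _ = 25 / 7 * ((∑ k ∈ range (t + 1), 2 ^ (k * (t - k)) : ℕ) : ℝ) := by push_cast; rw [mul_sum]
    _ ≤ 2 ^ ((t : ℝ) / 4) * 2 ^ ((t : ℝ) * t / 4) := by
        nlinarith [Real.rpow_nonneg zero_le_two ((t : ℝ) * t / 4)]
    _ = 2 ^ (((t : ℝ) * (t + 1)) / 4) := by rw [← Real.rpow_add two_pos]; ring_nf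
end

section
/- Let φ be a CNF formula with variable set W, let ν : W → {0,1} be an assignment, and let F̄₁, F̄₂ be (t⁺,t⁻)-labeled signed graphs on disjoint vertex sets such that F_φ = F̄₁ ⊗ F̄₂; let ν₁, ν₂ denote the restrictions of ν to the variables lying in V(F₁), V(F₂) respectively. Then ν satisfies φ if and only if there exist subspaces Σ⁺, Π⁺ of GF(2)^{t⁺} and Σ⁻, Π⁻ of GF(2)^{t⁻} such that ν₁ is of shape (Σ⁺, Σ⁻, Π⁺, Π⁻) in F̄₁ and ν₂ is of shape (Π⁺, Π⁻, Σ⁺, Σ⁻) in F̄₂. -/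
/-- Scalar product of binary vectors over GF(2). -/
def dotp {t : ℕ} (u v : Fin t → ZMod 2) : ZMod 2 := ∑ i, u i * v i

/-- The signed (bipartite) graph F_φ of a CNF formula φ with variable set `Var` and
clause set `Cl`:  `pos w c` means the literal w occurs in clause c (wc ∈ E⁺), and
`neg w c` means ¬w occurs in c (wc ∈ E⁻); the two edge sets are disjoint. -/
structure SignedBip (Var Cl : Type) where
  pos : Var → Cl → Prop
  neg : Var → Cl → Prop
  disj : ∀ w c, ¬ (pos w c ∧ neg w c)

/-- The assignment ν satisfies the clause c. -/
def SignedBip.SatClause {Var Cl : Type} (F : SignedBip Var Cl) (ν : Var → Bool) (c : Cl) : Prop :=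
  (∃ w, ν w = true ∧ F.pos w c) ∨ (∃ w, ν w = false ∧ F.neg w c)

/-- The assignment ν satisfies the formula φ (every clause of φ). -/
def SignedBip.Satisfies {Var Cl : Type} (F : SignedBip Var Cl) (ν : Var → Bool) : Prop :=
  ∀ c, F.SatClause ν c

/-- A (t⁺,t⁻)-labeled signed (sub)graph: vertex sets `VW ⊆ Var`, `VC ⊆ Cl`,
two edge relations, and labelings lab⁺, lab⁻ into GF(2)^{t⁺}, GF(2)^{t⁻}
(given on variable vertices and clause vertices separately). -/
structure LabSub (Var Cl : Type) (tp tn : ℕ) where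
  pos : Var → Cl → Prop
  neg : Var → Cl → Prop
  VW : Set Var
  VC : Set Cl
  labWp : Var → Fin tp → ZMod 2
  labCp : Cl → Fin tp → ZMod 2
  labWn : Var → Fin tn → ZMod 2
  labCn : Cl → Fin tn → ZMod 2

/-- F₁ is a signed subgraph of F_φ: its edges are edges of F_φ joining vertices of F₁. -/
def LabSub.SubgraphOf {Var Cl : Type} {tp tn : ℕ} (F₁ : LabSub Var Cl tp tn)
    (F : SignedBip Var Cl) : Prop :=
  ∀ w c, (F₁.pos w c → F.pos w c ∧ w ∈ F₁.VW ∧ c ∈ F₁.VC) ∧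
    (F₁.neg w c → F.neg w c ∧ w ∈ F₁.VW ∧ c ∈ F₁.VC)

/-- The partial assignment ν (restricted to the variables of F₁) is of shape
(Σ⁺, Σ⁻, Π⁺, Π⁻) in F̄₁:
(I) Σ⁺ is the span of the lab⁺-labels of the true variables of F₁ and Σ⁻ the span of the
lab⁻-labels of the false variables of F₁; and
(II) every clause vertex c of F₁ is adjacent in F₁⁺ to a true variable, or adjacent
in F₁⁻ to a false variable, or lab⁺(c) is non-orthogonal to Π⁺, or lab⁻(c) is
non-orthogonal to Π⁻. -/
def LabSub.Shape {Var Cl : Type} {tp tn : ℕ} (F₁ : LabSub Var Cl tp tn) (ν : Var → Bool)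
    (Sp : Submodule (ZMod 2) (Fin tp → ZMod 2)) (Sn : Submodule (ZMod 2) (Fin tn → ZMod 2))
    (Pp : Submodule (ZMod 2) (Fin tp → ZMod 2)) (Pn : Submodule (ZMod 2) (Fin tn → ZMod 2)) :
    Prop :=
  Sp = Submodule.span (ZMod 2) (F₁.labWp '' {w | w ∈ F₁.VW ∧ ν w = true}) ∧
  Sn = Submodule.span (ZMod 2) (F₁.labWn '' {w | w ∈ F₁.VW ∧ ν w = false}) ∧
  ∀ c ∈ F₁.VC,
    (∃ w ∈ F₁.VW, ν w = true ∧ F₁.pos w c) ∨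
    (∃ w ∈ F₁.VW, ν w = false ∧ F₁.neg w c) ∨
    (∃ v ∈ Pp, dotp (F₁.labCp c) v = 1) ∨
    (∃ v ∈ Pn, dotp (F₁.labCn c) v = 1)

/-- Both edge relations of F₁ join vertices of F₁ only. -/
def LabSub.EdgesInside {Var Cl : Type} {tp tn : ℕ} (F₁ : LabSub Var Cl tp tn) : Prop :=
  ∀ w c, (F₁.pos w c ∨ F₁.neg w c) → w ∈ F₁.VW ∧ c ∈ F₁.VC

/-- `F_φ = F̄₁ ⊗ F̄₂`: the vertex sets of F₁, F₂ are disjoint and partition the vertices of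
F_φ, and the positive (negative) edges of F_φ are those of F₁, those of F₂, and all
cross pairs whose lab⁺- (lab⁻-) labels have scalar product 1 over GF(2). -/
def IsLabelingJoin {Var Cl : Type} {tp tn : ℕ} (F : SignedBip Var Cl)
    (F₁ F₂ : LabSub Var Cl tp tn) : Prop :=
  F₁.VW ∪ F₂.VW = Set.univ ∧ Disjoint F₁.VW F₂.VW ∧
  F₁.VC ∪ F₂.VC = Set.univ ∧ Disjoint F₁.VC F₂.VC ∧
  (∀ w c, F.pos w c ↔
    (F₁.pos w c ∨ F₂.pos w c ∨
      (w ∈ F₁.VW ∧ c ∈ F₂.VC ∧ dotp (F₁.labWp w) (F₂.labCp c) = 1) ∨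
      (w ∈ F₂.VW ∧ c ∈ F₁.VC ∧ dotp (F₂.labWp w) (F₁.labCp c) = 1))) ∧
  (∀ w c, F.neg w c ↔
    (F₁.neg w c ∨ F₂.neg w c ∨
      (w ∈ F₁.VW ∧ c ∈ F₂.VC ∧ dotp (F₁.labWn w) (F₂.labCn c) = 1) ∨
      (w ∈ F₂.VW ∧ c ∈ F₁.VC ∧ dotp (F₂.labWn w) (F₁.labCn c) = 1)))


lemma dotp_comm {t : ℕ} (u v : Fin t → ZMod 2) : dotp u v = dotp v u := by
  simp [dotp, mul_comm]

lemma dotp_span_zero {t : ℕ} (u : Fin t → ZMod 2) (S : Set (Fin t → ZMod 2))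
    (h : ∀ s ∈ S, dotp u s = 0) : ∀ v ∈ Submodule.span (ZMod 2) S, dotp u v = 0 := by
  intro v hv
  induction hv using Submodule.span_induction with
  | mem x hx => exact h x hx
  | zero => simp [dotp]
  | add x y _ _ hx hy =>
      simp only [dotp] at hx hy ⊢
      simp [Pi.add_apply, mul_add, Finset.sum_add_distrib, hx, hy]
  | smul a x _ hx =>
      simp only [dotp, Pi.smul_apply, smul_eq_mul, mul_left_comm, ← Finset.mul_sum] at *
      simp [hx]

lemma dotp_span_one {t : ℕ} (u : Fin t → ZMod 2) (S : Set (Fin t → ZMod 2))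
    (v : Fin t → ZMod 2) (hv : v ∈ Submodule.span (ZMod 2) S) (h1 : dotp u v = 1) :
    ∃ s ∈ S, dotp u s = 1 := by
  by_contra hc
  push_neg at hc
  have hz : ∀ s ∈ S, dotp u s = 0 := by
    intro s hs
    have h01 : ∀ x : ZMod 2, x = 0 ∨ x = 1 := by decide
    rcases h01 (dotp u s) with h | h
    · exact h
    · exact absurd h (hc s hs)
  have := dotp_span_zero u S hz v hv
  rw [h1] at this
  exact one_ne_zero this

/-- if F_φ = F̄₁ ⊗ F̄₂ then an assignment ν satisfies φ iff there are
subspaces Σ⁺, Π⁺ of GF(2)^{t⁺} and Σ⁻, Π⁻ of GF(2)^{t⁻} such that the restriction of ν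
to F₁ is of shape (Σ⁺, Σ⁻, Π⁺, Π⁻) in F̄₁ and the restriction of ν to F₂ is of shape
(Π⁺, Π⁻, Σ⁺, Σ⁻) in F̄₂. -/
theorem statement_2 {Var Cl : Type} [Fintype Var] [Fintype Cl] {tp tn : ℕ}
    (F : SignedBip Var Cl) (F₁ F₂ : LabSub Var Cl tp tn)
    (h₁ : F₁.EdgesInside) (h₂ : F₂.EdgesInside)
    (hjoin : IsLabelingJoin F F₁ F₂) (ν : Var → Bool) :
    F.Satisfies ν ↔
      ∃ (Sp Pp : Submodule (ZMod 2) (Fin tp → ZMod 2))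
        (Sn Pn : Submodule (ZMod 2) (Fin tn → ZMod 2)),
        F₁.Shape ν Sp Sn Pp Pn ∧ F₂.Shape ν Pp Pn Sp Sn := by
  obtain ⟨hWu, hWd, hCu, hCd, hpos, hneg⟩ := hjoin
  constructor
  · intro hsat
    refine ⟨Submodule.span _ (F₁.labWp '' {w | w ∈ F₁.VW ∧ ν w = true}),
      Submodule.span _ (F₂.labWp '' {w | w ∈ F₂.VW ∧ ν w = true}),
      Submodule.span _ (F₁.labWn '' {w | w ∈ F₁.VW ∧ ν w = false}),
      Submodule.span _ (F₂.labWn '' {w | w ∈ F₂.VW ∧ ν w = false}),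
      ⟨rfl, rfl, ?_⟩, ⟨rfl, rfl, ?_⟩⟩
    · intro c hc
      rcases hsat c with ⟨w, hw, hp⟩ | ⟨w, hw, hn⟩
      · rw [hpos] at hp
        rcases hp with hp | hp | ⟨_, hc2, _⟩ | ⟨hw2, _, hd⟩
        · exact Or.inl ⟨w, (h₁ w c (Or.inl hp)).1, hw, hp⟩
        · exact absurd hc (Set.disjoint_right.mp hCd (h₂ w c (Or.inl hp)).2)
        · exact absurd hc (Set.disjoint_right.mp hCd hc2)
        · exact Or.inr (Or.inr (Or.inl ⟨F₂.labWp w,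
            Submodule.subset_span ⟨w, ⟨hw2, hw⟩, rfl⟩, by rw [dotp_comm]; exact hd⟩))
      · rw [hneg] at hn
        rcases hn with hn | hn | ⟨_, hc2, _⟩ | ⟨hw2, _, hd⟩
        · exact Or.inr (Or.inl ⟨w, (h₁ w c (Or.inr hn)).1, hw, hn⟩)
        · exact absurd hc (Set.disjoint_right.mp hCd (h₂ w c (Or.inr hn)).2)
        · exact absurd hc (Set.disjoint_right.mp hCd hc2)
        · exact Or.inr (Or.inr (Or.inr ⟨F₂.labWn w,
            Submodule.subset_span ⟨w, ⟨hw2, hw⟩, rfl⟩, by rw [dotp_comm]; exact hd⟩))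
    · intro c hc
      rcases hsat c with ⟨w, hw, hp⟩ | ⟨w, hw, hn⟩
      · rw [hpos] at hp
        rcases hp with hp | hp | ⟨hw1, _, hd⟩ | ⟨_, hc1, _⟩
        · exact absurd hc (Set.disjoint_left.mp hCd (h₁ w c (Or.inl hp)).2)
        · exact Or.inl ⟨w, (h₂ w c (Or.inl hp)).1, hw, hp⟩
        · exact Or.inr (Or.inr (Or.inl ⟨F₁.labWp w,
            Submodule.subset_span ⟨w, ⟨hw1, hw⟩, rfl⟩, by rw [dotp_comm]; exact hd⟩))
        · exact absurd hc (Set.disjoint_left.mp hCd hc1)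
      · rw [hneg] at hn
        rcases hn with hn | hn | ⟨hw1, _, hd⟩ | ⟨_, hc1, _⟩
        · exact absurd hc (Set.disjoint_left.mp hCd (h₁ w c (Or.inr hn)).2)
        · exact Or.inr (Or.inl ⟨w, (h₂ w c (Or.inr hn)).1, hw, hn⟩)
        · exact Or.inr (Or.inr (Or.inr ⟨F₁.labWn w,
            Submodule.subset_span ⟨w, ⟨hw1, hw⟩, rfl⟩, by rw [dotp_comm]; exact hd⟩))
        · exact absurd hc (Set.disjoint_left.mp hCd hc1)
  · rintro ⟨Sp, Pp, Sn, Pn, ⟨hSp, hSn, hI⟩, ⟨hPp, hPn, hII⟩⟩ c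
    have hcmem : c ∈ F₁.VC ∪ F₂.VC := by rw [hCu]; trivial
    rcases hcmem with hc | hc
    · rcases hI c hc with ⟨w, hw, hwt, hp⟩ | ⟨w, hw, hwf, hn⟩ |
        ⟨v, hv, hd⟩ | ⟨v, hv, hd⟩
      · exact Or.inl ⟨w, hwt, (hpos w c).mpr (Or.inl hp)⟩
      · exact Or.inr ⟨w, hwf, (hneg w c).mpr (Or.inl hn)⟩
      · rw [hPp] at hv
        obtain ⟨s, ⟨w, ⟨hw2, hwt⟩, rfl⟩, hds⟩ := dotp_span_one _ _ _ hv hd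
        exact Or.inl ⟨w, hwt, (hpos w c).mpr (Or.inr (Or.inr (Or.inr
          ⟨hw2, hc, by rw [dotp_comm]; exact hds⟩)))⟩
      · rw [hPn] at hv
        obtain ⟨s, ⟨w, ⟨hw2, hwf⟩, rfl⟩, hds⟩ := dotp_span_one _ _ _ hv hd
        exact Or.inr ⟨w, hwf, (hneg w c).mpr (Or.inr (Or.inr (Or.inr
          ⟨hw2, hc, by rw [dotp_comm]; exact hds⟩)))⟩
    · rcases hII c hc with ⟨w, hw, hwt, hp⟩ | ⟨w, hw, hwf, hn⟩ |
        ⟨v, hv, hd⟩ | ⟨v, hv, hd⟩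
      · exact Or.inl ⟨w, hwt, (hpos w c).mpr (Or.inr (Or.inl hp))⟩
      · exact Or.inr ⟨w, hwf, (hneg w c).mpr (Or.inr (Or.inl hn))⟩
      · rw [hSp] at hv
        obtain ⟨s, ⟨w, ⟨hw1, hwt⟩, rfl⟩, hds⟩ := dotp_span_one _ _ _ hv hd
        exact Or.inl ⟨w, hwt, (hpos w c).mpr (Or.inr (Or.inr (Or.inl
          ⟨hw1, hc, by rw [dotp_comm]; exact hds⟩)))⟩
      · rw [hSn] at hv
        obtain ⟨s, ⟨w, ⟨hw1, hwf⟩, rfl⟩, hds⟩ := dotp_span_one _ _ _ hv hd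
        exact Or.inr ⟨w, hwf, (hneg w c).mpr (Or.inr (Or.inr (Or.inl
          ⟨hw1, hc, by rw [dotp_comm]; exact hds⟩)))⟩
end
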